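/- arXiv:2403.07736 — 5 statements merged into one kernel-verified Lean document; each statement's English description precedes it below -/
import Mathlib

section
/- If (w*, b*, ξ*, z*) is an optimal solution of the ramp-loss SVM problem (RL-ℓp): minimize (1/p)‖w‖_p^p + C(∑_{i=1}^n ξ_i + 2∑_{i=1}^n z_i) subject to: for each i, z_i = 0 implies y_i(⟨w, x_i⟩ + b) ≥ 1 − ξ_i, with 0 ≤ ξ_i ≤ 2 and z_i ∈ {0,1}, and C > 0, then ξ_i* · z_i* = 0 for every i. -/
open Finset

/-! At an optimum with `z i = 1` the margin constraint of the `i`-th point is switched off, so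
`ξ i` can be lowered to `0` without losing feasibility; this lowers the objective by `C * ξ i`,
hence `ξ i = 0` by optimality and `C > 0`. -/

theorem Fintype.sum_update_eq_sum_sub_add {ι M : Type*} [Fintype ι] [DecidableEq ι]
    [AddCommGroup M] (f : ι → M) (i : ι) (a : M) :
    ∑ j, Function.update f i a j = ∑ j, f j - f i + a := by
  rw [sum_update_of_mem (mem_univ i), sdiff_singleton_eq_erase,
    ← add_sum_erase _ _ (mem_univ i)]
  abel

section RampLoss

variable {n d : ℕ} (x : Fin n → Fin d → ℝ) (y : Fin n → ℝ)

def RampLossFeasible (w : Fin d → ℝ) (b : ℝ) (ξ z : Fin n → ℝ) : Prop :=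
  (∀ i, 0 ≤ ξ i ∧ ξ i ≤ 2) ∧ (∀ i, z i = 0 ∨ z i = 1) ∧
    (∀ i, z i = 0 → y i * ((∑ k, w k * x i k) + b) ≥ 1 - ξ i)

theorem RampLossFeasible.update_slack_zero {w : Fin d → ℝ} {b : ℝ} {ξ z : Fin n → ℝ}
    (h : RampLossFeasible x y w b ξ z) {i : Fin n} (hzi : z i ≠ 0) :
    RampLossFeasible x y w b (Function.update ξ i 0) z := by
  obtain ⟨hξ, hz, hmargin⟩ := h
  refine ⟨fun j => ?_, hz, fun j hzj => ?_⟩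
  · rcases eq_or_ne j i with rfl | hji
    · simp
    · simpa [Function.update_of_ne hji] using hξ j
  · have hji : j ≠ i := by rintro rfl; exact hzi hzj
    simpa [Function.update_of_ne hji] using hmargin j hzj

end RampLoss

theorem rampLoss_optimal_complementarity_general
    (n d : ℕ) (x : Fin n → Fin d → ℝ) (y : Fin n → ℝ)
    (C p : ℝ) (hC : 0 < C)
    (Feasible : (Fin d → ℝ) → ℝ → (Fin n → ℝ) → (Fin n → ℝ) → Prop)
    (hFeas : ∀ w b ξ z, Feasible w b ξ z ↔
      (∀ i, 0 ≤ ξ i ∧ ξ i ≤ 2) ∧ (∀ i, z i = 0 ∨ z i = 1) ∧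
      (∀ i, z i = 0 → y i * ((∑ k, w k * x i k) + b) ≥ 1 - ξ i))
    (obj : (Fin d → ℝ) → ℝ → (Fin n → ℝ) → (Fin n → ℝ) → ℝ)
    (hobj : ∀ w b ξ z, obj w b ξ z =
      (1 / p) * (∑ k, |w k| ^ p) + C * ((∑ i, ξ i) + 2 * ∑ i, z i))
    (w' : Fin d → ℝ) (b' : ℝ) (ξ' z' : Fin n → ℝ)
    (hfeas : Feasible w' b' ξ' z')
    (hopt : ∀ w b ξ z, Feasible w b ξ z → obj w' b' ξ' z' ≤ obj w b ξ z) :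
    ∀ i, ξ' i * z' i = 0 := by
  intro i
  have hfeas' : RampLossFeasible x y w' b' ξ' z' := (hFeas _ _ _ _).1 hfeas
  rcases hfeas'.2.1 i with hzi | hzi
  · simp [hzi]
  have hlowered := hopt _ _ _ _ <| (hFeas _ _ _ _).2 <|
    hfeas'.update_slack_zero x y (i := i) (by simp [hzi])
  rw [hobj, hobj, Fintype.sum_update_eq_sum_sub_add] at hlowered
  have hξi : ξ' i = 0 := by
    refine le_antisymm ?_ (hfeas'.1 i).1
    nlinarith
  simp [hξi]

/-- At any optimal solution of the conditional ramp-loss SVM problem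
(RL-ℓp), the complementarity condition ξ_i* · z_i* = 0 holds for every i. -/
theorem rampLoss_optimal_complementarity
    (n d : ℕ) (x : Fin n → Fin d → ℝ) (y : Fin n → ℝ)
    (hy : ∀ i, y i = 1 ∨ y i = -1)
    (C p : ℝ) (hC : 0 < C) (hp : 1 ≤ p)
    (Feasible : (Fin d → ℝ) → ℝ → (Fin n → ℝ) → (Fin n → ℝ) → Prop)
    (hFeas : ∀ w b ξ z, Feasible w b ξ z ↔
      (∀ i, 0 ≤ ξ i ∧ ξ i ≤ 2) ∧ (∀ i, z i = 0 ∨ z i = 1) ∧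
      (∀ i, z i = 0 → y i * ((∑ k, w k * x i k) + b) ≥ 1 - ξ i))
    (obj : (Fin d → ℝ) → ℝ → (Fin n → ℝ) → (Fin n → ℝ) → ℝ)
    (hobj : ∀ w b ξ z, obj w b ξ z =
      (1 / p) * (∑ k, |w k| ^ p) + C * ((∑ i, ξ i) + 2 * ∑ i, z i))
    (w' : Fin d → ℝ) (b' : ℝ) (ξ' z' : Fin n → ℝ)
    (hfeas : Feasible w' b' ξ' z')
    (hopt : ∀ w b ξ z, Feasible w b ξ z → obj w' b' ξ' z' ≤ obj w b ξ z) :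
    ∀ i, ξ' i * z' i = 0 :=
  rampLoss_optimal_complementarity_general n d x y C p hC Feasible hFeas obj hobj w' b' ξ' z' hfeas
    hopt
end

section
/- (LP sensitivity via complementary slackness, ℓ1 case, '+' variant.) Consider the linear program P: minimize ∑_k(w̄_k⁺ + w̄_k⁻) + C(∑_i ξ̄_i + 2∑_i z̄_i) + w̃ over variables (w̄⁺, w̄⁻, b̄, ξ̄, z̄) subject to, for each i: y_i(∑_k(w̄_k⁺ − w̄_k⁻)x_{ik} + b̄) ≥ 1 − ξ̄_i − y_i w̃ x_{i k₀} − M_i z̄_i, plus box and nonnegativity constraints that do not involve the coordinate w̄_{k₀}⁺ except for the bound w̄_{k₀}⁺ ≥ −w̃. Suppose P has an optimal solution with w̄_{k₀}⁺ = 0 and optimal value Z, and let ᾱ ∈ ℝ^n_{≥0} be optimal dual multipliers for the displayed constraints satisfying complementary slackness. Then for any ŵ > −w̃, the optimal value Ẑ of P with the added constraint w̄_{k₀}⁺ = ŵ satisfies Z + ŵ·(1 − ∑_{i=1}^n ᾱ_i y_i x_{i k₀}) ≤ Ẑ. -/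
/-!
Take a solution `v'` of the perturbed problem and reset its coordinate `w̄_{k₀}⁺` from `ŵ` to `0`.
This lowers the objective by `ŵ` and the slack of margin constraint `i` by `ŵ yᵢ x_{ik₀}`, and the
reset point is admissible for the Lagrangian bound `Z ≤ L`. Since the multipliers are
nonnegative and `v'` is feasible, `L v' ≤ obj v' = Ẑ`, hence
`Z ≤ L v' - ŵ (1 - ∑ ᾱᵢ yᵢ x_{ik₀}) ≤ Ẑ - ŵ (1 - ∑ ᾱᵢ yᵢ x_{ik₀})`.
-/

open Finset

theorem Fintype.sum_apply_update {ι α M : Type*} [Fintype ι] [DecidableEq ι] [AddCommGroup M]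
    (φ : ι → α → M) (f : ι → α) (a : ι) (t : α) :
    ∑ k, φ k (Function.update f a t k) = ∑ k, φ k (f k) + (φ a t - φ a (f a)) := by
  have h_compl : ∀ k ∈ ({a}ᶜ : Finset ι), φ k (Function.update f a t k) = φ k (f k) :=
    fun k hk => by rw [Function.update_of_ne (by simpa using hk)]
  rw [Fintype.sum_eq_add_sum_compl a, Fintype.sum_eq_add_sum_compl a fun k => φ k (f k),
    Finset.sum_congr rfl h_compl, Function.update_self]
  abel

theorem add_mul_one_sub_sum_le_of_le_lagrangian {V ι : Type*} [Fintype ι]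
    (obj : V → ℝ) (g : V → ι → ℝ) (α b : ι → ℝ) (hα : ∀ i, 0 ≤ α i)
    (v v₀ : V) (t Z : ℝ) (hobj : obj v₀ = obj v - t) (hg : ∀ i, g v₀ i = g v i - t * b i)
    (hZ : Z ≤ obj v₀ - ∑ i, α i * g v₀ i) (hv : ∀ i, 0 ≤ g v i) :
    Z + t * (1 - ∑ i, α i * b i) ≤ obj v := by
  have h_shift : obj v₀ - ∑ i, α i * g v₀ i + t * (1 - ∑ i, α i * b i)
      = obj v - ∑ i, α i * g v i := by
    simp only [hobj, hg, mul_sub, sum_sub_distrib, mul_sum, mul_left_comm (α _) t]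
    ring
  have h_penalty : 0 ≤ ∑ i, α i * g v i := sum_nonneg fun i _ => mul_nonneg (hα i) (hv i)
  linarith

theorem lp_sensitivity_l1_plus_general
    (n d : ℕ) (x : Fin n → Fin d → ℝ) (y : Fin n → ℝ)
    (C : ℝ) (M : Fin n → ℝ)
    (k₀ : Fin d) (wt : ℝ) (hwt : 0 < wt)
    -- the box/nonnegativity feasible set S (not involving w̄_{k₀}⁺ except w̄_{k₀}⁺ ≥ −w̃)
    (S : Set ((Fin d → ℝ) × (Fin d → ℝ) × ℝ × (Fin n → ℝ) × (Fin n → ℝ)))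
    (hSupd : ∀ v ∈ S, ∀ t : ℝ, -wt ≤ t → (Function.update v.1 k₀ t, v.2) ∈ S)
    -- objective of P
    (obj : ((Fin d → ℝ) × (Fin d → ℝ) × ℝ × (Fin n → ℝ) × (Fin n → ℝ)) → ℝ)
    (hobj : ∀ v, obj v = (∑ k, (v.1 k + v.2.1 k)) +
      C * ((∑ i, v.2.2.2.1 i) + 2 * ∑ i, v.2.2.2.2 i) + wt)
    -- slacks of the displayed margin constraints
    (g : ((Fin d → ℝ) × (Fin d → ℝ) × ℝ × (Fin n → ℝ) × (Fin n → ℝ)) → Fin n → ℝ)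
    (hg : ∀ v i, g v i = y i * ((∑ k, (v.1 k - v.2.1 k) * x i k) + v.2.2.1) -
      (1 - v.2.2.2.1 i - y i * wt * x i k₀ - M i * v.2.2.2.2 i))
    -- primal optimum of P with w̄_{k₀}⁺ = 0 and value Z
    (Z : ℝ)
    -- optimal dual multipliers: the Lagrangian attains minimum value Z at the optimum
    (α : Fin n → ℝ) (hα : ∀ i, 0 ≤ α i)
    (L : ((Fin d → ℝ) × (Fin d → ℝ) × ℝ × (Fin n → ℝ) × (Fin n → ℝ)) → ℝ)
    (hL : ∀ v, L v = obj v - ∑ i, α i * g v i)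
    (hLmin : ∀ v ∈ S, v.1 k₀ = 0 → Z ≤ L v)
    -- the perturbed problem: P with added constraint w̄_{k₀}⁺ = ŵ, optimal value Ẑ
    (wh : ℝ)
    (v' : (Fin d → ℝ) × (Fin d → ℝ) × ℝ × (Fin n → ℝ) × (Fin n → ℝ))
    (hv'S : v' ∈ S) (hv'g : ∀ i, 0 ≤ g v' i) (hv'k : v'.1 k₀ = wh)
    (Zh : ℝ) (hZh : obj v' = Zh) :
    Z + wh * (1 - ∑ i, α i * (y i * x i k₀)) ≤ Zh := by
  set v₀ := (Function.update v'.1 k₀ 0, v'.2)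
  have hobj₀ : obj v₀ = obj v' - wh := by
    rw [hobj, hobj, Fintype.sum_apply_update (fun k s => s + v'.2.1 k), hv'k]
    ring
  have hg₀ : ∀ i, g v₀ i = g v' i - wh * (y i * x i k₀) := fun i => by
    rw [hg, hg, Fintype.sum_apply_update (fun k s => (s - v'.2.1 k) * x i k), hv'k]
    ring
  have hZ : Z ≤ L v₀ := hLmin v₀ (hSupd v' hv'S 0 (neg_nonpos.mpr hwt.le)) (by simp [v₀])
  rw [hL] at hZ
  rw [← hZh]
  exact add_mul_one_sub_sum_le_of_le_lagrangian obj g α _ hα v' v₀ wh Z hobj₀ hg₀ hZ hv'g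

/-- LP sensitivity via complementary slackness (ℓ1 case, '+' variant).
If the LP P has an optimal solution with w̄_{k₀}⁺ = 0 and value Z, with optimal dual
multipliers ᾱ for the margin constraints, then for any ŵ > −w̃ the optimal value Ẑ of P
with the added constraint w̄_{k₀}⁺ = ŵ satisfies Z + ŵ(1 − ∑ᾱ_i y_i x_{ik₀}) ≤ Ẑ. -/
theorem lp_sensitivity_l1_plus
    (n d : ℕ) (x : Fin n → Fin d → ℝ) (y : Fin n → ℝ) (hy : ∀ i, y i = 1 ∨ y i = -1)
    (C : ℝ) (hC : 0 < C) (M : Fin n → ℝ) (hM : ∀ i, 0 ≤ M i)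
    (k₀ : Fin d) (wt : ℝ) (hwt : 0 < wt)
    -- the box/nonnegativity feasible set S (not involving w̄_{k₀}⁺ except w̄_{k₀}⁺ ≥ −w̃)
    (S : Set ((Fin d → ℝ) × (Fin d → ℝ) × ℝ × (Fin n → ℝ) × (Fin n → ℝ)))
    (hSbd : ∀ v ∈ S, -wt ≤ v.1 k₀)
    (hSupd : ∀ v ∈ S, ∀ t : ℝ, -wt ≤ t → (Function.update v.1 k₀ t, v.2) ∈ S)
    -- objective of P
    (obj : ((Fin d → ℝ) × (Fin d → ℝ) × ℝ × (Fin n → ℝ) × (Fin n → ℝ)) → ℝ)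
    (hobj : ∀ v, obj v = (∑ k, (v.1 k + v.2.1 k)) +
      C * ((∑ i, v.2.2.2.1 i) + 2 * ∑ i, v.2.2.2.2 i) + wt)
    -- slacks of the displayed margin constraints
    (g : ((Fin d → ℝ) × (Fin d → ℝ) × ℝ × (Fin n → ℝ) × (Fin n → ℝ)) → Fin n → ℝ)
    (hg : ∀ v i, g v i = y i * ((∑ k, (v.1 k - v.2.1 k) * x i k) + v.2.2.1) -
      (1 - v.2.2.2.1 i - y i * wt * x i k₀ - M i * v.2.2.2.2 i))
    -- primal optimum of P with w̄_{k₀}⁺ = 0 and value Z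
    (Z : ℝ) (vstar : (Fin d → ℝ) × (Fin d → ℝ) × ℝ × (Fin n → ℝ) × (Fin n → ℝ))
    (hvS : vstar ∈ S) (hvg : ∀ i, 0 ≤ g vstar i) (hvk : vstar.1 k₀ = 0)
    (hvZ : obj vstar = Z)
    (hvopt : ∀ v ∈ S, (∀ i, 0 ≤ g v i) → Z ≤ obj v)
    -- optimal dual multipliers: the Lagrangian attains minimum value Z at the optimum
    (α : Fin n → ℝ) (hα : ∀ i, 0 ≤ α i)
    (L : ((Fin d → ℝ) × (Fin d → ℝ) × ℝ × (Fin n → ℝ) × (Fin n → ℝ)) → ℝ)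
    (hL : ∀ v, L v = obj v - ∑ i, α i * g v i)
    (hLmin : ∀ v ∈ S, v.1 k₀ = 0 → Z ≤ L v) (hLstar : L vstar = Z)
    -- the perturbed problem: P with added constraint w̄_{k₀}⁺ = ŵ, optimal value Ẑ
    (wh : ℝ) (hwh : -wt < wh)
    (v' : (Fin d → ℝ) × (Fin d → ℝ) × ℝ × (Fin n → ℝ) × (Fin n → ℝ))
    (hv'S : v' ∈ S) (hv'g : ∀ i, 0 ≤ g v' i) (hv'k : v'.1 k₀ = wh)
    (Zh : ℝ) (hZh : obj v' = Zh)
    (hv'opt : ∀ v ∈ S, (∀ i, 0 ≤ g v i) → v.1 k₀ = wh → Zh ≤ obj v) :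
    Z + wh * (1 - ∑ i, α i * (y i * x i k₀)) ≤ Zh :=
  lp_sensitivity_l1_plus_general n d x y C M k₀ wt hwt S hSupd obj hobj g hg Z α hα L hL hLmin wh v'
    hv'S hv'g hv'k Zh hZh
end

section
/- (Bound extraction from a Lagrangian lower bound, ℓ1 case.) Under the hypotheses of the previous sensitivity result, let UB be an upper bound on the optimal value of the original mixed-integer problem whose continuous relaxation is P, and suppose 1 − ∑_i ᾱ_i y_i x_{i k₀} > 0. Then any optimal solution of the mixed-integer problem satisfies w_{k₀}⁺ ≤ (UB − Z)/(1 − ∑_i ᾱ_i y_i x_{i k₀}) + w̃. -/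
theorem le_div_add_of_add_sub_mul_le {K : Type*} [Field K] [LinearOrder K] [IsStrictOrderedRing K]
    {Z U w w₀ c : K} (hc : 0 < c) (h : Z + (w - w₀) * c ≤ U) : w ≤ (U - Z) / c + w₀ := by
  have : w - w₀ ≤ (U - Z) / c := (le_div_iff₀ hc).mpr (by linarith)
  linarith

theorem bound_extraction_l1_general
    (n d : ℕ) (x : Fin n → Fin d → ℝ) (y : Fin n → ℝ)
    (k₀ : Fin d) (wt : ℝ)
    (Z UB : ℝ) (α : Fin n → ℝ)
    (hcoef : 0 < 1 - ∑ i, α i * (y i * x i k₀))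
    -- feasibility for the mixed-integer big-M ℓ1 ramp-loss problem
    (Feasible : ((Fin d → ℝ) × (Fin d → ℝ) × ℝ × (Fin n → ℝ) × (Fin n → ℝ)) → Prop)
    (obj : ((Fin d → ℝ) × (Fin d → ℝ) × ℝ × (Fin n → ℝ) × (Fin n → ℝ)) → ℝ)
    -- the Lagrangian lower bound coming from the sensitivity result for P
    (hsens : ∀ v, Feasible v →
      Z + (v.1 k₀ - wt) * (1 - ∑ i, α i * (y i * x i k₀)) ≤ obj v)
    -- an optimal solution of the mixed-integer problem, and UB an upper bound
    (vstar : (Fin d → ℝ) × (Fin d → ℝ) × ℝ × (Fin n → ℝ) × (Fin n → ℝ))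
    (hfeas : Feasible vstar)
    (hUB : obj vstar ≤ UB) :
    vstar.1 k₀ ≤ (UB - Z) / (1 - ∑ i, α i * (y i * x i k₀)) + wt :=
  le_div_add_of_add_sub_mul_le hcoef ((hsens vstar hfeas).trans hUB)

/-- Bound extraction from a Lagrangian lower bound (ℓ1 case). If UB bounds
the optimal value of the mixed-integer problem, P is its relaxation (after the change of
variable w_{k₀}⁺ = w̄_{k₀}⁺ + w̃) whose Lagrangian lower bound is
Z + ŵ(1 − ∑ᾱ_i y_i x_{ik₀}), and 1 − ∑ᾱ_i y_i x_{ik₀} > 0, then every optimal solution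
of the mixed-integer problem satisfies w_{k₀}⁺ ≤ (UB − Z)/(1 − ∑ᾱ_i y_i x_{ik₀}) + w̃. -/
theorem bound_extraction_l1
    (n d : ℕ) (x : Fin n → Fin d → ℝ) (y : Fin n → ℝ) (hy : ∀ i, y i = 1 ∨ y i = -1)
    (C : ℝ) (hC : 0 < C) (M : Fin n → ℝ) (hM : ∀ i, 0 ≤ M i)
    (k₀ : Fin d) (wt : ℝ) (hwt : 0 < wt)
    (Z UB : ℝ) (α : Fin n → ℝ) (hα : ∀ i, 0 ≤ α i)
    (hcoef : 0 < 1 - ∑ i, α i * (y i * x i k₀))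
    -- feasibility for the mixed-integer big-M ℓ1 ramp-loss problem
    (Feasible : ((Fin d → ℝ) × (Fin d → ℝ) × ℝ × (Fin n → ℝ) × (Fin n → ℝ)) → Prop)
    (hFeas : ∀ v, Feasible v ↔
      (∀ k, 0 ≤ v.1 k ∧ 0 ≤ v.2.1 k) ∧
      (∀ i, 0 ≤ v.2.2.2.1 i ∧ v.2.2.2.1 i ≤ 2) ∧
      (∀ i, v.2.2.2.1 i ≤ 2 * (1 - v.2.2.2.2 i)) ∧
      (∀ i, v.2.2.2.2 i = 0 ∨ v.2.2.2.2 i = 1) ∧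
      (∀ i, y i * ((∑ k, (v.1 k - v.2.1 k) * x i k) + v.2.2.1) ≥
        1 - v.2.2.2.1 i - M i * v.2.2.2.2 i))
    (obj : ((Fin d → ℝ) × (Fin d → ℝ) × ℝ × (Fin n → ℝ) × (Fin n → ℝ)) → ℝ)
    (hobj : ∀ v, obj v = (∑ k, (v.1 k + v.2.1 k)) +
      C * ((∑ i, v.2.2.2.1 i) + 2 * ∑ i, v.2.2.2.2 i))
    -- the Lagrangian lower bound coming from the sensitivity result for P
    (hsens : ∀ v, Feasible v →
      Z + (v.1 k₀ - wt) * (1 - ∑ i, α i * (y i * x i k₀)) ≤ obj v)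
    -- an optimal solution of the mixed-integer problem, and UB an upper bound
    (vstar : (Fin d → ℝ) × (Fin d → ℝ) × ℝ × (Fin n → ℝ) × (Fin n → ℝ))
    (hfeas : Feasible vstar) (hopt : ∀ v, Feasible v → obj vstar ≤ obj v)
    (hUB : obj vstar ≤ UB) :
    vstar.1 k₀ ≤ (UB - Z) / (1 - ∑ i, α i * (y i * x i k₀)) + wt :=
  bound_extraction_l1_general n d x y k₀ wt Z UB α hcoef Feasible obj hsens vstar hfeas hUB
end

section
/- (Quadratic Lagrangian sensitivity, ℓ2 case.) Consider the convex program Q: minimize (1/2)∑_k w̄_k² + C(∑_i ξ̄_i + 2∑_i z̄_i) + (1/2)w̃² + w̃·w̄_{k₀} over (w̄, b̄, ξ̄, z̄) subject to, for each i: y_i(∑_k w̄_k x_{ik} + b̄) ≥ 1 − ξ̄_i − y_i w̃ x_{i k₀} − M_i z̄_i, with ξ̄ ∈ [0,2]^n, ξ̄_i ≤ 2(1 − z̄_i), z̄ ∈ [0,1]^n. Suppose Q has an optimal solution with w̄_{k₀} = 0 and value Z, and ᾱ ∈ ℝ^n_{≥0} are optimal multipliers such that the Lagrangian with these multipliers attains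 minimum value Z at the primal optimum. Then for any ŵ ∈ ℝ, the optimal value Ẑ of Q with the added constraint w̄_{k₀} = ŵ satisfies Z + ŵ·((1/2)ŵ + w̃ − ∑_{i=1}^n ᾱ_i y_i x_{i k₀}) ≤ Ẑ. -/
open Finset

/-- Quadratic Lagrangian sensitivity (ℓ2 case). If the convex program Q has
an optimal solution with w̄_{k₀} = 0 and value Z, and ᾱ are optimal multipliers whose
Lagrangian attains minimum value Z at the primal optimum, then for any ŵ the optimal
value Ẑ of Q with the added constraint w̄_{k₀} = ŵ satisfies
Z + ŵ((1/2)ŵ + w̃ − ∑ᾱ_i y_i x_{ik₀}) ≤ Ẑ. -/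
theorem quadratic_sensitivity_l2
    (n d : ℕ) (x : Fin n → Fin d → ℝ) (y : Fin n → ℝ) (hy : ∀ i, y i = 1 ∨ y i = -1)
    (C : ℝ) (hC : 0 < C) (M : Fin n → ℝ) (hM : ∀ i, 0 ≤ M i)
    (k₀ : Fin d) (wt : ℝ)
    -- box constraints of Q
    (Box : Set ((Fin d → ℝ) × ℝ × (Fin n → ℝ) × (Fin n → ℝ)))
    (hBox : ∀ v, v ∈ Box ↔
      (∀ i, 0 ≤ v.2.2.1 i ∧ v.2.2.1 i ≤ 2) ∧
      (∀ i, v.2.2.1 i ≤ 2 * (1 - v.2.2.2 i)) ∧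
      (∀ i, 0 ≤ v.2.2.2 i ∧ v.2.2.2 i ≤ 1))
    -- objective of Q
    (obj : ((Fin d → ℝ) × ℝ × (Fin n → ℝ) × (Fin n → ℝ)) → ℝ)
    (hobj : ∀ v, obj v = (1 / 2) * (∑ k, (v.1 k) ^ 2) +
      C * ((∑ i, v.2.2.1 i) + 2 * ∑ i, v.2.2.2 i) + (1 / 2) * wt ^ 2 + wt * v.1 k₀)
    -- slacks of the margin constraints
    (g : ((Fin d → ℝ) × ℝ × (Fin n → ℝ) × (Fin n → ℝ)) → Fin n → ℝ)
    (hg : ∀ v i, g v i = y i * ((∑ k, v.1 k * x i k) + v.2.1) -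
      (1 - v.2.2.1 i - y i * wt * x i k₀ - M i * v.2.2.2 i))
    -- primal optimum of Q with w̄_{k₀} = 0 and value Z
    (Z : ℝ) (vstar : (Fin d → ℝ) × ℝ × (Fin n → ℝ) × (Fin n → ℝ))
    (hvB : vstar ∈ Box) (hvg : ∀ i, 0 ≤ g vstar i) (hvk : vstar.1 k₀ = 0)
    (hvZ : obj vstar = Z)
    (hvopt : ∀ v ∈ Box, (∀ i, 0 ≤ g v i) → Z ≤ obj v)
    -- optimal multipliers: the Lagrangian attains minimum value Z at the primal optimum
    (α : Fin n → ℝ) (hα : ∀ i, 0 ≤ α i)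
    (L : ((Fin d → ℝ) × ℝ × (Fin n → ℝ) × (Fin n → ℝ)) → ℝ)
    (hL : ∀ v, L v = obj v - ∑ i, α i * g v i)
    (hLmin : ∀ v ∈ Box, v.1 k₀ = 0 → Z ≤ L v) (hLstar : L vstar = Z)
    -- Q with added constraint w̄_{k₀} = ŵ, optimal value Ẑ
    (wh : ℝ) (v' : (Fin d → ℝ) × ℝ × (Fin n → ℝ) × (Fin n → ℝ))
    (hv'B : v' ∈ Box) (hv'g : ∀ i, 0 ≤ g v' i) (hv'k : v'.1 k₀ = wh)
    (Zh : ℝ) (hZh : obj v' = Zh)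
    (hv'opt : ∀ v ∈ Box, (∀ i, 0 ≤ g v i) → v.1 k₀ = wh → Zh ≤ obj v) :
    Z + wh * ((1 / 2) * wh + wt - ∑ i, α i * (y i * x i k₀)) ≤ Zh := by

  set v'' : (Fin d → ℝ) × ℝ × (Fin n → ℝ) × (Fin n → ℝ) :=
    (Function.update v'.1 k₀ 0, v'.2) with hv''
  have hsplit : ∀ (f : Fin d → ℝ), ∑ k, f k = f k₀ + ∑ k ∈ Finset.univ.erase k₀, f k :=
    fun f => (Finset.add_sum_erase _ f (mem_univ k₀)).symm
  have herase : ∀ (f : ℝ → ℝ),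
      ∑ k ∈ Finset.univ.erase k₀, f (v''.1 k) = ∑ k ∈ Finset.univ.erase k₀, f (v'.1 k) := by
    intro f
    refine Finset.sum_congr rfl fun k hk => ?_
    rw [show v''.1 k = v'.1 k from Function.update_of_ne (Finset.ne_of_mem_erase hk) _ _]
  have hk0 : v''.1 k₀ = 0 := Function.update_self _ _ _
  have hv''B : v'' ∈ Box := by
    rw [hBox]; exact (hBox v').mp hv'B
  have hA : ∑ k, (v''.1 k) ^ 2 = ∑ k, (v'.1 k) ^ 2 - wh ^ 2 := by
    rw [hsplit (fun k => (v''.1 k) ^ 2), hsplit (fun k => (v'.1 k) ^ 2),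
      herase (fun t => t ^ 2), hk0, hv'k]
    ring
  have hBsum : ∀ i, ∑ k, v''.1 k * x i k = (∑ k, v'.1 k * x i k) - wh * x i k₀ := by
    intro i
    rw [hsplit (fun k => v''.1 k * x i k), hsplit (fun k => v'.1 k * x i k)]
    have he : ∑ k ∈ Finset.univ.erase k₀, v''.1 k * x i k
        = ∑ k ∈ Finset.univ.erase k₀, v'.1 k * x i k := by
      refine Finset.sum_congr rfl fun k hk => ?_
      rw [show v''.1 k = v'.1 k from Function.update_of_ne (Finset.ne_of_mem_erase hk) _ _]
    rw [he, hk0, hv'k]; ring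
  have hgv : ∀ i, g v'' i = g v' i - y i * wh * x i k₀ := by
    intro i
    rw [hg, hg, hBsum i]
    have : v''.2 = v'.2 := rfl
    rw [this]; ring
  have hobjv : obj v'' = obj v' - (1 / 2) * wh ^ 2 - wt * wh := by
    rw [hobj, hobj, hA, hk0, hv'k]
    have : v''.2 = v'.2 := rfl
    rw [this]; ring
  have hZle : Z ≤ L v'' := hLmin v'' hv''B hk0
  have hLv'' : L v'' = L v' - (1 / 2) * wh ^ 2 - wt * wh
      + wh * ∑ i, α i * (y i * x i k₀) := by
    rw [hL, hL, hobjv]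
    have h1 : ∑ i, α i * g v'' i
        = (∑ i, α i * g v' i) - wh * ∑ i, α i * (y i * x i k₀) := by
      rw [Finset.mul_sum, ← Finset.sum_sub_distrib]
      refine Finset.sum_congr rfl fun i _ => ?_
      rw [hgv i]; ring
    rw [h1]; ring
  have hLv'le : L v' ≤ Zh := by
    rw [hL, ← hZh]
    have : 0 ≤ ∑ i, α i * g v' i :=
      Finset.sum_nonneg fun i _ => mul_nonneg (hα i) (hv'g i)
    linarith
  rw [hLv''] at hZle
  linarith
end

section
/- (Quadratic bound extraction, ℓ2 case.) Under the hypotheses of the quadratic Lagrangian sensitivity result, let UB ≥ Z be an upper bound of the mixed-integer ℓ2 ramp-loss problem (of which Q is a relaxation after the change of variable w_{k₀} = w̄_{k₀} + w̃), and set S = ∑_i ᾱ_i y_i x_{i k₀} and D = (w̃ − S)² − 2(Z − UB). Then D ≥ 0 and every optimal solution of the mixed-integer problem satisfies S − √D ≤ w_{k₀} ≤ S + √D. -/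
/-! Completing the square turns the Lagrangian inequality into `(w_{k₀} - S)² ≤ D`;
both `0 ≤ D` and the interval `|w_{k₀} - S| ≤ √D` are read off from that. -/

theorem mul_half_add_le_iff_sq_add_le (u b r : ℝ) :
    u * (u / 2 + b) ≤ r ↔ (u + b) ^ 2 ≤ b ^ 2 + 2 * r := by
  rw [show (u + b) ^ 2 = b ^ 2 + 2 * (u * (u / 2 + b)) by ring]
  constructor <;> intro h <;> linarith

theorem quadratic_bound_extraction_l2_general
    (Z UB wt S t : ℝ)
    (hineq : Z + (t - wt) * ((1 / 2) * (t - wt) + wt - S) ≤ UB) :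
    0 ≤ (wt - S) ^ 2 - 2 * (Z - UB) ∧
      S - Real.sqrt ((wt - S) ^ 2 - 2 * (Z - UB)) ≤ t ∧
      t ≤ S + Real.sqrt ((wt - S) ^ 2 - 2 * (Z - UB)) := by
  have hsq : (t - S) ^ 2 ≤ (wt - S) ^ 2 - 2 * (Z - UB) := by
    have hlag : (t - wt) * ((t - wt) / 2 + (wt - S)) ≤ UB - Z := by linarith
    have := (mul_half_add_le_iff_sq_add_le _ _ _).mp hlag
    convert this using 1 <;> ring
  obtain ⟨hlo, hhi⟩ := abs_le.mp (Real.abs_le_sqrt hsq)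
  exact ⟨(sq_nonneg _).trans hsq, by linarith, by linarith⟩

/-- Quadratic bound extraction (ℓ2 case). If Z ≤ UB and the value
t = w_{k₀} of an optimal mixed-integer solution satisfies the Lagrangian relaxation
inequality Z + (t − w̃)((1/2)(t − w̃) + w̃ − S) ≤ UB (with w̄_{k₀} = t − w̃), then
D = (w̃ − S)² − 2(Z − UB) ≥ 0 and S − √D ≤ w_{k₀} ≤ S + √D. -/
theorem quadratic_bound_extraction_l2
    (Z UB wt S t : ℝ) (hZUB : Z ≤ UB)
    (hineq : Z + (t - wt) * ((1 / 2) * (t - wt) + wt - S) ≤ UB) :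
    0 ≤ (wt - S) ^ 2 - 2 * (Z - UB) ∧
      S - Real.sqrt ((wt - S) ^ 2 - 2 * (Z - UB)) ≤ t ∧
      t ≤ S + Real.sqrt ((wt - S) ^ 2 - 2 * (Z - UB)) :=
  quadratic_bound_extraction_l2_general Z UB wt S t hineq
end
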